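/- arXiv:2203.10775 — 2 statements merged into one kernel-verified Lean document; each statement's English description precedes it below -/
import Mathlib

section
/- Let X₁, X₂, … be i.i.d. random variables with the SVG distribution with parameters a, b > 0 and location m = 0. Define Â′_N = (1/N)∑_{i=1}^N |X_i| and V̂′_N = (1/N)∑_{i=1}^N X_i². Then there exists a constant C > 0 (depending on a and b) such that for all N ≥ 1, P((1/2)·ln V̂′_N − ln Â′_N > (1/2)·ln(π/2)) ≥ 1 − C/N. -/
open MeasureTheory ProbabilityTheory Filter Real
open scoped Topology

/-- The symmetric variance-gamma (SVG) distribution with shape `a`, scale `b` and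
location `m`: the law of `m + √(b·G)·Z` where `G ~ Gamma(a,1)` and `Z ~ N(0,1)`
are independent. -/
noncomputable def svg (a b m : ℝ) : Measure ℝ :=
  ((gammaMeasure a 1).prod (gaussianReal 0 1)).map
    (fun p : ℝ × ℝ => m + Real.sqrt (b * p.1) * p.2)

/-- Empirical first absolute moment `Â′_N`. -/
noncomputable def empAbsMean {Ω : Type*} (X : ℕ → Ω → ℝ) (N : ℕ) (ω : Ω) : ℝ :=
  (∑ i ∈ Finset.range N, |X i ω|) / N

/-- Empirical second raw moment `V̂′_N`. -/
noncomputable def empSqMean {Ω : Type*} (X : ℕ → Ω → ℝ) (N : ℕ) (ω : Ω) : ℝ :=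
  (∑ i ∈ Finset.range N, (X i ω) ^ 2) / N

/-!
Write `X = √(bG)·Z` with `G ~ Gamma(a,1)` and `Z ~ N(0,1)` independent. Then
`E|X| = √b·E√G·√(2/π)` and `E X² = b·E(√G)²`; as `√G` is not a.s. constant,
`(E√G)² < E(√G)²`, hence `π/2·(E|X|)² < E X²`. The event of the theorem is
`π/2·Â′_N² < V̂′_N`, an open condition on `(Â′_N, V̂′_N)` satisfied at `(E|X|, E X²)`, so it
holds as soon as both empirical moments are `ε`-close to their means, and Chebyshev's
inequality bounds the probability of either deviation by a constant over `N`.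
-/

open Set
open scoped NNReal

namespace ProbabilityTheory

section NullFibers

variable {Ω : Type*} [MeasurableSpace Ω] {μ : Measure Ω} {X : Ω → ℝ}

lemma not_ae_eq_const_of_measure_preimage_singleton [NeZero μ]
    (hX : ∀ c, μ (X ⁻¹' {c}) = 0) (c : ℝ) : ¬ ∀ᵐ ω ∂μ, X ω = c := fun h ↦ by
  obtain ⟨ω, hωc, hωnc⟩ := (h.and (measure_eq_zero_iff_ae_notMem.mp (hX c))).exists
  exact hωnc hωc

lemma sq_integral_lt_integral_sq [IsProbabilityMeasure μ] (hX : MemLp X 2 μ)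
    (hfib : ∀ c, μ (X ⁻¹' {c}) = 0) : μ[X] ^ 2 < μ[X ^ 2] := by
  have hvar : 0 < Var[X; μ] := (variance_nonneg X μ).lt_of_ne fun h ↦
    not_ae_eq_const_of_measure_preimage_singleton hfib _
      (ae_eq_integral_of_variance_eq_zero hX h.symm)
  rw [variance_eq_sub hX] at hvar
  linarith

end NullFibers

section Gamma

variable {a r : ℝ}

instance nullSingletonClass_gammaMeasure : NullSingletonClass (gammaMeasure a r) := by
  unfold gammaMeasure; infer_instance

instance sFinite_gammaMeasure : SFinite (gammaMeasure a r) := by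
  unfold gammaMeasure; infer_instance

lemma gammaMeasure_Iic_zero : gammaMeasure a r (Iic 0) = 0 := by
  rw [← measure_congr Iio_ae_eq_Iic, gammaMeasure, withDensity_apply _ measurableSet_Iio]
  exact lintegral_gammaPDF_of_nonpos le_rfl

lemma ae_mem_Ioi_gammaMeasure : ∀ᵐ x ∂gammaMeasure a r, x ∈ Ioi 0 := by
  rw [ae_iff]
  exact measure_mono_null (fun x (hx : ¬ 0 < x) ↦ not_lt.mp hx) gammaMeasure_Iic_zero

lemma integrable_sqrt_pow_gammaMeasure (ha : 0 < a) (hr : 0 < r) (k : ℕ) :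
    Integrable (fun x ↦ √x ^ k) (gammaMeasure a r) := by
  rw [← Measure.restrict_eq_self_of_ae_mem ae_mem_Ioi_gammaMeasure, gammaMeasure,
    restrict_withDensity measurableSet_Ioi,
    integrable_withDensity_iff (f := gammaPDF a r) (measurable_gammaPDFReal a r).ennreal_ofReal
      (ae_of_all _ fun _ ↦ ENNReal.ofReal_lt_top)]
  have hs : -1 < a + k / 2 - 1 := by linarith [show (0 : ℝ) ≤ k / 2 by positivity]
  refine IntegrableOn.congr_fun ((integrableOn_rpow_mul_exp_neg_mul_rpow hs one_pos hr).const_mul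
    (r ^ a / Gamma a)) (fun x (hx : 0 < x) ↦ ?_) measurableSet_Ioi
  have hsqrt : √x ^ k = x ^ ((k : ℝ) / 2) := by
    rw [Real.sqrt_eq_rpow, ← Real.rpow_natCast, ← Real.rpow_mul hx.le]
    ring_nf
  rw [gammaPDF, ENNReal.toReal_ofReal (gammaPDFReal_nonneg ha hr x)]
  simp only [gammaPDFReal, if_pos hx.le, hsqrt, Real.rpow_one, neg_mul]
  rw [show a + k / 2 - 1 = k / 2 + (a - 1) by ring, Real.rpow_add hx]
  ring

lemma gammaMeasure_preimage_sqrt_singleton (c : ℝ) :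
    gammaMeasure a r ((√·) ⁻¹' {c}) = 0 := by
  refine measure_mono_null (fun x (hx : √x = c) ↦ ?_)
    (measure_union_null (measure_singleton (c ^ 2)) gammaMeasure_Iic_zero)
  rcases le_or_gt x 0 with hx0 | hx0
  · exact Or.inr hx0
  · exact Or.inl (by rw [mem_singleton_iff, ← hx, Real.sq_sqrt hx0.le])

lemma integral_sqrt_gammaMeasure_pos (ha : 0 < a) (hr : 0 < r) :
    0 < ∫ x, √x ∂gammaMeasure a r := by
  have := isProbabilityMeasure_gammaMeasure ha hr
  refine (integral_nonneg fun x ↦ Real.sqrt_nonneg x).lt_of_ne fun h ↦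
    not_ae_eq_const_of_measure_preimage_singleton (μ := gammaMeasure a r)
      gammaMeasure_preimage_sqrt_singleton 0 ?_
  exact (integral_eq_zero_iff_of_nonneg (fun x ↦ Real.sqrt_nonneg x)
    (by simpa using integrable_sqrt_pow_gammaMeasure ha hr 1)).mp h.symm

lemma sq_integral_sqrt_gammaMeasure_lt (ha : 0 < a) (hr : 0 < r) :
    (∫ x, √x ∂gammaMeasure a r) ^ 2 < ∫ x, √x ^ 2 ∂gammaMeasure a r := by
  have := isProbabilityMeasure_gammaMeasure ha hr
  exact sq_integral_lt_integral_sq ((memLp_two_iff_integrable_sq (by fun_prop)).mpr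
    (integrable_sqrt_pow_gammaMeasure ha hr 2)) gammaMeasure_preimage_sqrt_singleton

end Gamma

section Gaussian

lemma integral_sq_gaussianReal (m : ℝ) (v : ℝ≥0) :
    ∫ x, x ^ 2 ∂gaussianReal m v = m ^ 2 + v := by
  have h := variance_eq_sub (memLp_id_gaussianReal (μ := m) (v := v) 2)
  simp only [variance_id_gaussianReal, Pi.pow_apply, id_eq, integral_id_gaussianReal] at h
  linarith

lemma integrable_abs_pow_gaussianReal (m : ℝ) (v : ℝ≥0) (k : ℕ) :
    Integrable (fun x ↦ |x| ^ k) (gaussianReal m v) :=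
  (memLp_id_gaussianReal (k : ℝ≥0)).integrable_norm_pow'

lemma integral_abs_gaussianReal_zero_one : ∫ x, |x| ∂gaussianReal 0 1 = √(2 / π) := by
  have hpdf (x : ℝ) : gaussianPDFReal 0 1 x • |x| =
      (√(2 * π))⁻¹ * (|x| ^ (1 : ℝ) * Real.exp (-(1 / 2) * |x| ^ (2 : ℝ))) := by
    simp only [gaussianPDFReal, smul_eq_mul, Real.rpow_one, Real.rpow_two, sq_abs,
      NNReal.coe_one, mul_one, sub_zero]
    ring_nf
  simp_rw [integral_gaussianReal_eq_integral_smul one_ne_zero, hpdf, integral_const_mul]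
  rw [integral_comp_abs (f := fun t ↦ t ^ (1 : ℝ) * Real.exp (-(1 / 2) * t ^ (2 : ℝ))),
    integral_rpow_mul_exp_neg_mul_rpow two_pos (by norm_num) one_half_pos]
  have h4 : 2 * π * (2 / π) = 2 ^ 2 := by field_simp
  field_simp
  rw [← Real.sqrt_mul (by positivity), h4, Real.sqrt_sq two_pos.le]
  norm_num

end Gaussian

section SampleMean

variable {Ω : Type*} [MeasurableSpace Ω] {P : Measure Ω} [IsProbabilityMeasure P]
  {μ : Measure ℝ} {X : ℕ → Ω → ℝ}

lemma one_sub_add_le_measureReal_of_univ_subset {E B₁ B₂ : Set Ω}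
    (h : univ ⊆ E ∪ B₁ ∪ B₂) : 1 - (P.real B₁ + P.real B₂) ≤ P.real E := by
  have := calc
    1 = P.real univ := probReal_univ.symm
    _ ≤ P.real (E ∪ B₁ ∪ B₂) := measureReal_mono h
    _ ≤ P.real E + P.real B₁ + P.real B₂ :=
      (measureReal_union_le _ _).trans (add_le_add_left (measureReal_union_le _ _) _)
  linarith

lemma measureReal_abs_sampleMean_sub_ge_le (hXmeas : ∀ i, Measurable (X i))
    (hindep : iIndepFun X P) (hdist : ∀ i, P.map (X i) = μ) {f : ℝ → ℝ} (hf : Measurable f)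
    (hf2 : MemLp f 2 μ) {N : ℕ} (hN : 0 < N) {ε : ℝ} (hε : 0 < ε) :
    P.real {ω | ε ≤ |(∑ i ∈ Finset.range N, f (X i ω)) / N - ∫ x, f x ∂μ|} ≤
      Var[f; μ] / (N * ε ^ 2) := by
  have hident (i : ℕ) : IdentDistrib (f ∘ X i) f P μ :=
    (IdentDistrib.mk (hXmeas i).aemeasurable aemeasurable_id
      (by rw [hdist i, Measure.map_id])).comp hf
  have hmem (i : ℕ) : MemLp (f ∘ X i) 2 P := (hident i).memLp_iff.mpr hf2
  set S := ∑ i ∈ Finset.range N, f ∘ X i with hS_def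
  have hS : MemLp S 2 P := memLp_finsetSum' _ fun i _ ↦ hmem i
  have hmean : P[S] = (N : ℝ) * μ[f] := by
    simp only [hS_def, Finset.sum_apply]
    rw [integral_finsetSum _ fun i _ ↦ (hmem i).integrable one_le_two]
    have hint (i : ℕ) : ∫ ω, f (X i ω) ∂P = μ[f] := (hident i).integral_eq
    simp [hint]
  have hvar : Var[S; P] = N * Var[f; μ] := by
    rw [IndepFun.variance_sum (fun i _ ↦ hmem i)
      fun i _ j _ hij ↦ (hindep.indepFun hij).comp hf hf]
    simp [(hident _).variance_eq]
  have hNε : 0 < (N : ℝ) * ε := by positivity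
  have hset : {ω | ε ≤ |(∑ i ∈ Finset.range N, f (X i ω)) / N - ∫ x, f x ∂μ|} =
      {ω | N * ε ≤ |S ω - P[S]|} := by
    ext ω
    have hN' : (0 : ℝ) < N := by positivity
    have hdiv : (∑ i ∈ Finset.range N, f (X i ω)) / N - μ[f] =
        ((∑ i ∈ Finset.range N, f (X i ω)) - N * μ[f]) / N := by field_simp
    rw [mem_ofPred_eq, mem_ofPred_eq, hmean, hdiv, abs_div, abs_of_pos hN', le_div_iff₀ hN',
      mul_comm, hS_def, Finset.sum_apply]
    rfl
  calc P.real {ω | ε ≤ |(∑ i ∈ Finset.range N, f (X i ω)) / N - ∫ x, f x ∂μ|}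
      ≤ (ENNReal.ofReal (Var[S; P] / (N * ε) ^ 2)).toReal := by
        rw [hset]
        exact ENNReal.toReal_mono ENNReal.ofReal_ne_top (meas_ge_le_variance_div_sq hS hNε)
    _ = Var[f; μ] / (N * ε ^ 2) := by
        rw [ENNReal.toReal_ofReal (div_nonneg (variance_nonneg _ _) (by positivity)), hvar]
        field_simp

end SampleMean

end ProbabilityTheory

section SVG

open ProbabilityTheory

variable {a b : ℝ}

lemma svg_zero : svg a b 0 =
    ((gammaMeasure a 1).prod (gaussianReal 0 1)).map (fun p ↦ √(b * p.1) * p.2) := by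
  simp only [svg, zero_add]

lemma integrable_abs_pow_svg (ha : 0 < a) (hb : 0 ≤ b) (k : ℕ) :
    Integrable (fun x ↦ |x| ^ k) (svg a b 0) := by
  rw [svg_zero, integrable_map_measure (by fun_prop) (by fun_prop)]
  convert ((integrable_sqrt_pow_gammaMeasure ha one_pos k).const_mul (√b ^ k)).mul_prod
    (integrable_abs_pow_gaussianReal 0 1 k) using 2 with p
  simp only [Function.comp, abs_mul, Real.sqrt_mul hb, abs_of_nonneg (Real.sqrt_nonneg _),
    mul_pow]

lemma memLp_abs_svg (ha : 0 < a) (hb : 0 ≤ b) : MemLp (fun x ↦ |x|) 2 (svg a b 0) :=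
  (memLp_two_iff_integrable_sq (by fun_prop)).mpr (integrable_abs_pow_svg ha hb 2)

lemma memLp_sq_svg (ha : 0 < a) (hb : 0 ≤ b) : MemLp (fun x ↦ x ^ 2) 2 (svg a b 0) :=
  (memLp_two_iff_integrable_sq (by fun_prop)).mpr <| (integrable_abs_pow_svg ha hb 4).congr
    (ae_of_all _ fun x ↦ by simp only [← sq_abs x, ← pow_mul])

lemma integral_abs_svg (hb : 0 ≤ b) :
    ∫ x, |x| ∂svg a b 0 = √b * (∫ g, √g ∂gammaMeasure a 1) * √(2 / π) := by
  rw [svg_zero, integral_map (by fun_prop) (by fun_prop)]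
  simp only [abs_mul, Real.sqrt_mul hb, abs_of_nonneg (Real.sqrt_nonneg _)]
  rw [integral_prod_mul (fun g ↦ √b * √g) (fun z ↦ |z|), integral_const_mul,
    integral_abs_gaussianReal_zero_one]

lemma integral_sq_svg (hb : 0 ≤ b) :
    ∫ x, x ^ 2 ∂svg a b 0 = b * ∫ g, √g ^ 2 ∂gammaMeasure a 1 := by
  rw [svg_zero, integral_map (by fun_prop) (by fun_prop)]
  simp only [mul_pow, Real.sqrt_mul hb, Real.sq_sqrt hb]
  rw [integral_prod_mul (fun g ↦ b * √g ^ 2) (fun z ↦ z ^ 2), integral_const_mul,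
    integral_sq_gaussianReal]
  norm_num

lemma integral_abs_svg_pos (ha : 0 < a) (hb : 0 < b) : 0 < ∫ x, |x| ∂svg a b 0 := by
  rw [integral_abs_svg hb.le]
  have := integral_sqrt_gammaMeasure_pos ha one_pos
  positivity

lemma pi_div_two_mul_sq_integral_abs_svg_lt (ha : 0 < a) (hb : 0 < b) :
    π / 2 * (∫ x, |x| ∂svg a b 0) ^ 2 < ∫ x, x ^ 2 ∂svg a b 0 := by
  have hpi : π / 2 * √(2 / π) ^ 2 = 1 := by
    rw [Real.sq_sqrt (by positivity)]
    field_simp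
  rw [integral_abs_svg hb.le, integral_sq_svg hb.le, mul_pow, mul_pow, Real.sq_sqrt hb.le]
  calc π / 2 * (b * (∫ g, √g ∂gammaMeasure a 1) ^ 2 * √(2 / π) ^ 2)
      = b * (∫ g, √g ∂gammaMeasure a 1) ^ 2 := by
        linear_combination b * (∫ g, √g ∂gammaMeasure a 1) ^ 2 * hpi
    _ < b * ∫ g, √g ^ 2 ∂gammaMeasure a 1 :=
      mul_lt_mul_of_pos_left (sq_integral_sqrt_gammaMeasure_lt ha one_pos) hb

end SVG

lemma half_log_pi_div_two_lt {A V : ℝ} (hA : 0 < A) (h : π / 2 * A ^ 2 < V) :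
    1 / 2 * log (π / 2) < 1 / 2 * log V - log A := by
  have hlog := Real.log_lt_log (by positivity) h
  rw [Real.log_mul (by positivity) (by positivity), Real.log_pow] at hlog
  push_cast at hlog
  linarith

lemma exists_pos_half_log_pi_div_two_lt {m₁ m₂ : ℝ} (hm₁ : 0 < m₁) (h : π / 2 * m₁ ^ 2 < m₂) :
    ∃ ε > 0, ∀ A V, |A - m₁| < ε → |V - m₂| < ε →
      1 / 2 * log (π / 2) < 1 / 2 * log V - log A := by
  have hU : IsOpen {p : ℝ × ℝ | 0 < p.1 ∧ π / 2 * p.1 ^ 2 < p.2} :=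
    (isOpen_lt continuous_const continuous_fst).inter (isOpen_lt (by fun_prop) continuous_snd)
  obtain ⟨ε, hε, hball⟩ := Metric.isOpen_iff.mp hU (m₁, m₂) ⟨hm₁, h⟩
  refine ⟨ε, hε, fun A V hA hV ↦ ?_⟩
  have hAV : (A, V) ∈ Metric.ball (m₁, m₂) ε := by
    rw [Metric.mem_ball, Prod.dist_eq, Real.dist_eq, Real.dist_eq]
    exact max_lt hA hV
  exact half_log_pi_div_two_lt (hball hAV).1 (hball hAV).2

/-- Feasibility of the modified MME for the SVG distribution with `m = 0`:
`P(½ln V̂′_N − ln Â′_N > ½ln(π/2)) ≥ 1 − C/N`. -/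
theorem svg_modified_mme_feasible
    {Ω : Type*} [MeasurableSpace Ω] (P : Measure Ω) [IsProbabilityMeasure P]
    (a b : ℝ) (ha : 0 < a) (hb : 0 < b)
    (X : ℕ → Ω → ℝ) (hXmeas : ∀ i, Measurable (X i))
    (hindep : iIndepFun X P)
    (hdist : ∀ i, Measure.map (X i) P = svg a b 0) :
    ∃ C : ℝ, 0 < C ∧ ∀ N : ℕ, 1 ≤ N →
      1 - C / N ≤
        (P {ω | (1 / 2) * Real.log (π / 2) <
            (1 / 2) * Real.log (empSqMean X N ω) - Real.log (empAbsMean X N ω)}).toReal := by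
  obtain ⟨ε, hε, hclose⟩ := exists_pos_half_log_pi_div_two_lt (integral_abs_svg_pos ha hb)
    (pi_div_two_mul_sq_integral_abs_svg_lt ha hb)
  set v₁ := Var[fun x ↦ |x|; svg a b 0]
  set v₂ := Var[fun x ↦ x ^ 2; svg a b 0]
  have hv : 0 ≤ v₁ + v₂ := add_nonneg (variance_nonneg _ _) (variance_nonneg _ _)
  refine ⟨(v₁ + v₂) / ε ^ 2 + 1, by positivity, fun N hN ↦ ?_⟩
  set E := {ω | (1 / 2) * Real.log (π / 2) <
    (1 / 2) * Real.log (empSqMean X N ω) - Real.log (empAbsMean X N ω)}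
  set B₁ := {ω | ε ≤ |empAbsMean X N ω - ∫ x, |x| ∂svg a b 0|}
  set B₂ := {ω | ε ≤ |empSqMean X N ω - ∫ x, x ^ 2 ∂svg a b 0|}
  have hcover : univ ⊆ E ∪ B₁ ∪ B₂ := fun ω _ ↦ by
    by_contra h
    simp only [mem_union, not_or, B₁, B₂, mem_ofPred_eq, not_le] at h
    exact h.1.1 (hclose _ _ h.1.2 h.2)
  have h₁ : P.real B₁ ≤ v₁ / (N * ε ^ 2) :=
    measureReal_abs_sampleMean_sub_ge_le hXmeas hindep hdist measurable_abs
      (memLp_abs_svg ha hb.le) hN hε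
  have h₂ : P.real B₂ ≤ v₂ / (N * ε ^ 2) :=
    measureReal_abs_sampleMean_sub_ge_le hXmeas hindep hdist (measurable_id.pow_const 2)
      (memLp_sq_svg ha hb.le) hN hε
  have hC : ((v₁ + v₂) / ε ^ 2 + 1) / N = v₁ / (N * ε ^ 2) + v₂ / (N * ε ^ 2) + 1 / N := by
    ring
  have hinvN : (0 : ℝ) ≤ 1 / N := by positivity
  have hE := one_sub_add_le_measureReal_of_univ_subset (P := P) hcover
  change 1 - _ ≤ P.real E
  linarith
end

section
/- Fix m ∈ ℝ and σ > 0. For each a > 0, let X_a be a random variable with the SVG distribution with parameters a, b = σ²/a and location m. Then as a → ∞, the laws of X_a converge weakly to the normal distribution N(m, σ²). -/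
open MeasureTheory ProbabilityTheory Filter
open scoped Topology

/-! Conditionally on `G`, an SVG variable with `b = σ²/a` is Gaussian with variance `σ² G / a`,
so `∫ f d(svg a (σ²/a) m) = E[Φ (σ² G / a)]` with `Φ v = ∫ f dN(m, v)` bounded and continuous.
Since `G ~ Gamma(a, 1)` has mean and variance `a`, Chebyshev's inequality gives `G / a → 1` in
probability, hence `E[Φ (σ² G / a)] → Φ σ² = ∫ f dN(m, σ²)`. -/

open scoped BoundedContinuousFunction

section Concentration

variable {ι Ω α : Type*} [MeasurableSpace Ω] [PseudoMetricSpace α] [MeasurableSpace α]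
  [OpensMeasurableSpace α]

theorem tendsto_integral_comp_of_tendsto_measure_dist_ge {μ : ι → Measure Ω} {l : Filter ι}
    {X : ι → Ω → α} {c : α} {g : α → ℝ} {C : ℝ}
    (hμ : ∀ᶠ i in l, IsProbabilityMeasure (μ i)) (hX : ∀ i, Measurable (X i))
    (hXc : ∀ δ > 0, Tendsto (fun i => μ i {ω | δ ≤ dist (X i ω) c}) l (𝓝 0))
    (hg : StronglyMeasurable g) (hgc : ContinuousAt g c) (hgC : ∀ x, |g x| ≤ C) :
    Tendsto (fun i => ∫ ω, g (X i ω) ∂μ i) l (𝓝 (g c)) := by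
  rw [Metric.tendsto_nhds]
  intro ε hε
  obtain ⟨δ, hδ, hgδ⟩ := Metric.continuousAt_iff.mp hgc (ε / 2) (half_pos hε)
  set S : ι → Set Ω := fun i => {ω | δ ≤ dist (X i ω) c}
  have hS : ∀ i, MeasurableSet (S i) := fun i =>
    measurableSet_le measurable_const ((continuous_id.dist continuous_const).measurable.comp (hX i))
  have hpt : ∀ i ω, |g (X i ω) - g c| ≤ ε / 2 + (S i).indicator (fun _ => 2 * C) ω := by
    intro i ω
    by_cases hω : ω ∈ S i
    · rw [Set.indicator_of_mem hω]
      linarith [abs_sub (g (X i ω)) (g c), hgC (X i ω), hgC c]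
    · rw [Set.indicator_of_notMem hω, add_zero]
      exact (hgδ (not_le.mp hω)).le
  have hbound : ∀ i, IsProbabilityMeasure (μ i) →
      dist (∫ ω, g (X i ω) ∂μ i) (g c) ≤ ε / 2 + 2 * C * (μ i).real (S i) := by
    intro i _
    have hgX : Integrable (fun ω => g (X i ω)) (μ i) :=
      Integrable.of_bound (hg.comp_measurable (hX i)).aestronglyMeasurable C
        (ae_of_all _ fun ω => hgC _)
    calc dist (∫ ω, g (X i ω) ∂μ i) (g c) = |∫ ω, (g (X i ω) - g c) ∂μ i| := by
          rw [integral_sub hgX (integrable_const _), integral_const, Real.dist_eq]; simp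
      _ ≤ ∫ ω, |g (X i ω) - g c| ∂μ i := abs_integral_le_integral_abs
      _ ≤ ∫ ω, (ε / 2 + (S i).indicator (fun _ => 2 * C) ω) ∂μ i :=
          integral_mono ((hgX.sub (integrable_const _)).abs)
            ((integrable_const _).add ((integrable_const _).indicator (hS i))) (hpt i)
      _ = ε / 2 + 2 * C * (μ i).real (S i) := by
          rw [integral_add (integrable_const _) ((integrable_const _).indicator (hS i)),
            integral_const, integral_indicator_const _ (hS i)]
          simp [mul_comm]
  have hsmall : ∀ᶠ i in l, 2 * C * (μ i).real (S i) < ε / 2 := by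
    have h0 : Tendsto (fun i => 2 * C * (μ i).real (S i)) l (𝓝 (2 * C * 0)) :=
      ((ENNReal.tendsto_toReal ENNReal.zero_ne_top).comp (hXc δ hδ)).const_mul _
    rw [mul_zero] at h0
    exact h0.eventually_lt_const (half_pos hε)
  filter_upwards [hμ, hsmall] with i hi hi'
  linarith [hbound i hi]

end Concentration

section GammaMoments

lemma measurable_gammaPDF (a r : ℝ) : Measurable (gammaPDF a r) :=
  (measurable_gammaPDFReal a r).ennreal_ofReal

variable {a r : ℝ}

lemma integral_gammaMeasure_eq (ha : 0 < a) (hr : 0 < r) (f : ℝ → ℝ) :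
    ∫ x, f x ∂gammaMeasure a r = ∫ x, gammaPDFReal a r x * f x := by
  rw [gammaMeasure, integral_withDensity_eq_integral_toReal_smul (measurable_gammaPDF a r)
    (ae_of_all _ fun _ => ENNReal.ofReal_lt_top)]
  simp_rw [gammaPDF, ENNReal.toReal_ofReal (gammaPDFReal_nonneg ha hr _), smul_eq_mul]

lemma integrable_gammaMeasure_iff (ha : 0 < a) (hr : 0 < r) {f : ℝ → ℝ} :
    Integrable f (gammaMeasure a r) ↔ Integrable fun x => gammaPDFReal a r x * f x := by
  rw [gammaMeasure, integrable_withDensity_iff_integrable_smul' (measurable_gammaPDF a r)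
    (ae_of_all _ fun _ => ENNReal.ofReal_lt_top)]
  simp_rw [gammaPDF, ENNReal.toReal_ofReal (gammaPDFReal_nonneg ha hr _), smul_eq_mul]

lemma gammaPDFReal_mul_pow (ha : 0 < a) (hr : 0 < r) (n : ℕ) {x : ℝ} (hx : x ≠ 0) :
    gammaPDFReal a r x * x ^ n
      = Real.Gamma (a + n) / (Real.Gamma a * r ^ n) * gammaPDFReal (a + n) r x := by
  unfold gammaPDFReal
  split_ifs with hx0
  · have hxpos : 0 < x := lt_of_le_of_ne hx0 (Ne.symm hx)
    have hΓ : Real.Gamma (a + n) ≠ 0 := (Real.Gamma_pos_of_pos (by positivity)).ne'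
    have hΓa : Real.Gamma a ≠ 0 := (Real.Gamma_pos_of_pos ha).ne'
    rw [show a + n - 1 = (a - 1) + n by ring, Real.rpow_add hxpos, Real.rpow_add hr,
      Real.rpow_natCast, Real.rpow_natCast]
    field_simp
  · simp

lemma integral_gammaPDFReal (ha : 0 < a) (hr : 0 < r) : ∫ x, gammaPDFReal a r x = 1 := by
  have := isProbabilityMeasure_gammaMeasure ha hr
  simpa using (integral_gammaMeasure_eq ha hr fun _ => 1).symm

lemma integrable_gammaPDFReal (ha : 0 < a) (hr : 0 < r) : Integrable (gammaPDFReal a r) := by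
  have := isProbabilityMeasure_gammaMeasure ha hr
  simpa using (integrable_gammaMeasure_iff ha hr).mp (integrable_const (1 : ℝ))

lemma gammaPDFReal_mul_pow_ae_eq (ha : 0 < a) (hr : 0 < r) (n : ℕ) :
    (fun x => gammaPDFReal a r x * x ^ n) =ᵐ[volume]
      fun x => Real.Gamma (a + n) / (Real.Gamma a * r ^ n) * gammaPDFReal (a + n) r x := by
  filter_upwards [(Set.countable_singleton (0 : ℝ)).ae_notMem volume] with x hx
  exact gammaPDFReal_mul_pow ha hr n hx

lemma integrable_pow_gammaMeasure (ha : 0 < a) (hr : 0 < r) (n : ℕ) :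
    Integrable (fun x => x ^ n) (gammaMeasure a r) := by
  rw [integrable_gammaMeasure_iff ha hr]
  refine Integrable.congr ?_ (gammaPDFReal_mul_pow_ae_eq ha hr n).symm
  exact (integrable_gammaPDFReal (by positivity) hr).const_mul _

lemma integral_pow_gammaMeasure (ha : 0 < a) (hr : 0 < r) (n : ℕ) :
    ∫ x, x ^ n ∂gammaMeasure a r = Real.Gamma (a + n) / (Real.Gamma a * r ^ n) := by
  rw [integral_gammaMeasure_eq ha hr, integral_congr_ae (gammaPDFReal_mul_pow_ae_eq ha hr n),
    integral_const_mul, integral_gammaPDFReal (by positivity) hr, mul_one]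

lemma integral_id_gammaMeasure (ha : 0 < a) (hr : 0 < r) :
    ∫ x, x ∂gammaMeasure a r = a / r := by
  have h := integral_pow_gammaMeasure ha hr 1
  simp only [pow_one, Nat.cast_one] at h
  rw [h, Real.Gamma_add_one ha.ne']
  field_simp [(Real.Gamma_pos_of_pos ha).ne']

lemma variance_id_gammaMeasure (ha : 0 < a) (hr : 0 < r) :
    variance id (gammaMeasure a r) = a / r ^ 2 := by
  have := isProbabilityMeasure_gammaMeasure ha hr
  have h2 := integral_pow_gammaMeasure ha hr 2
  rw [variance_eq_sub (memLp_two_iff_integrable_sq aestronglyMeasurable_id |>.mpr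
      (integrable_pow_gammaMeasure ha hr 2))]
  simp only [Pi.pow_apply, id_eq, integral_id_gammaMeasure ha hr, h2, Nat.cast_ofNat]
  rw [show a + 2 = (a + 1) + 1 by ring, Real.Gamma_add_one (by positivity),
    Real.Gamma_add_one ha.ne']
  field_simp [(Real.Gamma_pos_of_pos ha).ne']
  ring

lemma gammaMeasure_abs_sub_ge_le (ha : 0 < a) (hr : 0 < r) {c : ℝ} (hc : 0 < c) :
    gammaMeasure a r {x | c ≤ |x - a / r|} ≤ ENNReal.ofReal (a / r ^ 2 / c ^ 2) := by
  have := isProbabilityMeasure_gammaMeasure ha hr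
  have h := meas_ge_le_variance_div_sq (memLp_two_iff_integrable_sq aestronglyMeasurable_id |>.mpr
      (integrable_pow_gammaMeasure ha hr 2)) hc
  simpa [integral_id_gammaMeasure ha hr, variance_id_gammaMeasure ha hr] using h

end GammaMoments

lemma tendsto_gammaMeasure_dist_div_self_ge {δ : ℝ} (hδ : 0 < δ) :
    Tendsto (fun a => gammaMeasure a 1 {x | δ ≤ dist (x / a) 1}) atTop (𝓝 0) := by
  have hbound : ∀ᶠ a in atTop,
      gammaMeasure a 1 {x | δ ≤ dist (x / a) 1} ≤ ENNReal.ofReal ((δ ^ 2)⁻¹ * a⁻¹) := by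
    filter_upwards [eventually_gt_atTop 0] with a ha
    have hset : {x : ℝ | δ ≤ dist (x / a) 1} = {x | a * δ ≤ |x - a / 1|} := by
      ext x
      rw [Set.mem_ofPred_eq, Set.mem_ofPred_eq, Real.dist_eq, div_one,
        show x / a - 1 = (x - a) / a by field_simp, abs_div, abs_of_pos ha, le_div_iff₀ ha,
        mul_comm]
    rw [hset]
    refine (gammaMeasure_abs_sub_ge_le ha one_pos (by positivity)).trans_eq ?_
    congr 1
    field_simp
  have hlim : Tendsto (fun a : ℝ => ENNReal.ofReal ((δ ^ 2)⁻¹ * a⁻¹)) atTop (𝓝 0) := by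
    simpa using ENNReal.tendsto_ofReal (tendsto_inv_atTop_zero.const_mul (δ ^ 2)⁻¹)
  exact tendsto_of_tendsto_of_tendsto_of_le_of_le' tendsto_const_nhds hlim
    (Eventually.of_forall fun _ => bot_le) hbound

lemma gaussianReal_map_const_add_sqrt_mul (m : ℝ) {v : ℝ} (hv : 0 ≤ v) :
    (gaussianReal 0 1).map (fun z => m + √v * z) = gaussianReal m ⟨v, hv⟩ := by
  have hcomp : (fun z => m + √v * z) = (m + ·) ∘ (√v * ·) := rfl
  rw [hcomp, ← Measure.map_map (measurable_const_add m) (measurable_const_mul _),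
    gaussianReal_map_const_mul, gaussianReal_map_const_add]
  congr 1
  · simp
  · ext
    simp [Real.sq_sqrt hv]
    rfl

lemma continuous_integral_const_add_sqrt_mul (f : ℝ →ᵇ ℝ) (m : ℝ) (ν : Measure ℝ)
    [IsFiniteMeasure ν] : Continuous fun v => ∫ z, f (m + √v * z) ∂ν :=
  continuous_of_dominated (bound := fun _ => ‖f‖)
    (fun v => (by fun_prop : Continuous fun z => f (m + √v * z)).aestronglyMeasurable)
    (fun v => ae_of_all _ fun z => f.norm_coe_le_norm _) (integrable_const _)
    (ae_of_all _ fun z => by fun_prop)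

lemma integral_svg (f : ℝ →ᵇ ℝ) {a : ℝ} (ha : 0 < a) (b m : ℝ) :
    ∫ x, f x ∂svg a b m
      = ∫ g, ∫ z, f (m + √(b * g) * z) ∂gaussianReal 0 1 ∂gammaMeasure a 1 := by
  have := isProbabilityMeasure_gammaMeasure ha one_pos
  have hcont : Continuous fun p : ℝ × ℝ => m + √(b * p.1) * p.2 := by fun_prop
  rw [svg, integral_map hcont.aemeasurable f.continuous.aestronglyMeasurable]
  exact integral_prod _ ((f.compContinuous ⟨_, hcont⟩).integrable _)

theorem svg_tendsto_gaussian_general (m : ℝ) (σ : ℝ) :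
    ∀ f : BoundedContinuousFunction ℝ ℝ,
      Tendsto (fun a : ℝ => ∫ x, f x ∂(svg a (σ ^ 2 / a) m)) atTop
        (𝓝 (∫ x, f x ∂(gaussianReal m ⟨σ ^ 2, sq_nonneg σ⟩))) := by
  intro f
  set Φ : ℝ → ℝ := fun v => ∫ z, f (m + √v * z) ∂gaussianReal 0 1 with hΦ
  have hΦ_cont : Continuous Φ := continuous_integral_const_add_sqrt_mul f m _
  have hΦ_le (v : ℝ) : |Φ v| ≤ ‖f‖ := by
    simpa using norm_integral_le_of_norm_le_const (μ := gaussianReal 0 1)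
      (ae_of_all _ fun z => f.norm_coe_le_norm (m + √v * z))
  have hlim : ∫ x, f x ∂gaussianReal m ⟨σ ^ 2, sq_nonneg σ⟩ = Φ (σ ^ 2 * 1) := by
    rw [mul_one, ← gaussianReal_map_const_add_sqrt_mul m (sq_nonneg σ),
      integral_map (by fun_prop) f.continuous.aestronglyMeasurable]
  have hsvg : ∀ᶠ a in atTop,
      ∫ g, Φ (σ ^ 2 * (g / a)) ∂gammaMeasure a 1 = ∫ x, f x ∂svg a (σ ^ 2 / a) m := by
    filter_upwards [eventually_gt_atTop 0] with a ha
    simp only [integral_svg f ha, hΦ, mul_div_assoc', div_mul_eq_mul_div]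
  rw [hlim]
  refine Tendsto.congr' hsvg (tendsto_integral_comp_of_tendsto_measure_dist_ge
    (X := fun a g => g / a) ?_ (fun a => measurable_id.div_const a)
    (fun δ hδ => tendsto_gammaMeasure_dist_div_self_ge hδ)
    (hΦ_cont.comp (continuous_const_mul _)).stronglyMeasurable
    (hΦ_cont.comp (continuous_const_mul _)).continuousAt (fun t => hΦ_le _))
  filter_upwards [eventually_gt_atTop 0] with a ha
  exact isProbabilityMeasure_gammaMeasure ha one_pos

/-- With `b = σ²/a`, the SVG distribution converges weakly to `N(m, σ²)` as `a → ∞`. -/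
theorem svg_tendsto_gaussian (m : ℝ) (σ : ℝ) (hσ : 0 < σ) :
    ∀ f : BoundedContinuousFunction ℝ ℝ,
      Tendsto (fun a : ℝ => ∫ x, f x ∂(svg a (σ ^ 2 / a) m)) atTop
        (𝓝 (∫ x, f x ∂(gaussianReal m ⟨σ ^ 2, sq_nonneg σ⟩))) :=
  svg_tendsto_gaussian_general m σ
end
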